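/- arXiv:1403.3419 — 4 statements merged into one kernel-verified Lean document; each statement's English description precedes it below -/
import Mathlib

section
/- Let σ₀ be the cyclic permutation (1 2 … n) of {1,…,n}, and for any permutation σ define ↗(σ) = #{i : σ(i) > i}. Then for every permutation σ of {1,…,n}, ↗(σ) = ↗(σ₀ σ σ₀⁻¹). -/
/-! Substituting `i = σ₀ j` turns `↗(σ₀ σ σ₀⁻¹)` into the number of `j` with `σ₀ j < σ₀ (σ j)`,
i.e. the excedances of `σ` for the order on `Fin n` in which `last` is moved to the bottom.
Only comparisons involving `last` change: `σ⁻¹ last` stops being an excedance and `last`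
becomes one (both unless `σ` fixes `last`), so the transposition of these two points matches
the two sets. -/

open Finset

theorem card_filter_conj_apply {α : Type*} [Fintype α] (r : α → α → Prop) [DecidableRel r]
    (ρ σ : Equiv.Perm α) :
    #{i | r i ((ρ * σ * ρ⁻¹) i)} = #{j | r (ρ j) (ρ (σ j))} := by
  refine (card_equiv ρ fun j => ?_).symm
  rw [mem_filter_univ, mem_filter_univ]
  simp

theorem finRotate_lt_finRotate_iff {m : ℕ} {x y : Fin (m + 1)} (hx : x ≠ Fin.last m)
    (hy : y ≠ Fin.last m) : finRotate (m + 1) x < finRotate (m + 1) y ↔ x < y := by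
  rw [Fin.lt_def, Fin.lt_def, coe_finRotate_of_ne_last hx, coe_finRotate_of_ne_last hy]
  omega

theorem zero_lt_finRotate_iff {m : ℕ} {y : Fin (m + 1)} :
    0 < finRotate (m + 1) y ↔ y ≠ Fin.last m := by
  rw [Fin.pos_iff_ne_zero, ← finRotate_last, (finRotate _).injective.ne_iff]

theorem card_filter_lt_eq_card_filter_finRotate_lt {m : ℕ} (σ : Equiv.Perm (Fin (m + 1))) :
    #{j | j < σ j} = #{j | finRotate (m + 1) j < finRotate (m + 1) (σ j)} := by
  set a := σ⁻¹ (Fin.last m)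
  refine card_equiv (Equiv.swap a (Fin.last m)) fun j => ?_
  have hσa : σ a = Fin.last m := (Equiv.Perm.inv_eq_iff_eq.mp rfl).symm
  rw [mem_filter_univ, mem_filter_univ]
  rcases eq_or_ne j a with rfl | hja
  · rw [Equiv.swap_apply_left, hσa, finRotate_last, Fin.lt_last_iff_ne_last,
      zero_lt_finRotate_iff, Ne, Ne, Equiv.Perm.inv_eq_iff_eq, eq_comm]
  rcases eq_or_ne j (Fin.last m) with rfl | hjl
  · rw [Equiv.swap_apply_right, hσa, finRotate_last]
    simp only [Fin.not_lt_zero, iff_false, not_lt, Fin.le_last]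
  · have hσj : σ j ≠ Fin.last m := fun h => hja (σ.injective (h.trans hσa.symm))
    rw [Equiv.swap_apply_of_ne_of_ne hja hjl, finRotate_lt_finRotate_iff hjl hσj]

/-- The count `↗(σ) = #{i : σ(i) > i}` is invariant under conjugation by the
cyclic permutation `σ₀ = (1 2 … n)` (here `finRotate n : i ↦ i + 1 mod n`). -/
theorem upCount_conj_finRotate (n : ℕ) (σ : Equiv.Perm (Fin n)) :
    (Finset.univ.filter fun i : Fin n => σ i > i).card
      = (Finset.univ.filter fun i : Fin n =>
          (finRotate n * σ * (finRotate n)⁻¹) i > i).card := by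
  cases n with
  | zero => rfl
  | succ m =>
    simp only [gt_iff_lt]
    rw [card_filter_conj_apply (· < ·), card_filter_lt_eq_card_filter_finRotate_lt]
end

section
/- The torsion of a class γ ∈ H₁(G), 𝒯(γ) = −⟨γ, e⟩ + Σ_{⟨γ,A⟩<0, ⟨[A],e⟩=0} ⟨γ, A⟩ − Σ_{⟨γ,A⟩>0, ⟨[A],e⟩=1} ⟨γ, A⟩ (for any fixed edge e), is unchanged when the orientation of any arrow of G is reversed (γ being kept the same underlying curve, so that ⟨γ, A⟩ changes sign and the fundamental loop of A is replaced by the complementary one). -/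
/-- The torsion of a class `γ`, computed at a fixed edge `e` by
`𝒯(γ) = −⟨γ,e⟩ + Σ_{⟨γ,A⟩<0, ⟨[A],e⟩=0} ⟨γ,A⟩ − Σ_{⟨γ,A⟩>0, ⟨[A],e⟩=1} ⟨γ,A⟩`.
Here `g j = ⟨γ, A_j⟩` is the coordinate along the `j`-th arrow, `mem j`
records whether `e` belongs to the fundamental loop of `A_j`, and `ge = ⟨γ,e⟩`. -/
def torsionExpr {n : ℕ} (mem : Fin n → Bool) (g : Fin n → ℤ) (ge : ℤ) : ℤ :=
  -ge + (∑ j : Fin n, if g j < 0 ∧ mem j = false then g j else 0)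
      - (∑ j : Fin n, if 0 < g j ∧ mem j = true then g j else 0)

/-- The torsion is unchanged when the orientation of any arrow `j₀` is
reversed: the coordinate `⟨γ, A_{j₀}⟩` changes sign and the membership of the
fixed edge `e` in the fundamental loop of `A_{j₀}` is flipped (the new
fundamental loop is the complementary one, `[A'] = [K] − [A]` on edges). -/
theorem torsionExpr_reverse_arrow {n : ℕ} (mem : Fin n → Bool) (g : Fin n → ℤ)
    (ge : ℤ) (j0 : Fin n) :
    torsionExpr (Function.update mem j0 (!mem j0))
        (Function.update g j0 (-(g j0))) ge
      = torsionExpr mem g ge := by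
  unfold torsionExpr
  have key : ∀ (m : Fin n → Bool) (f : Fin n → ℤ),
      (∑ j : Fin n, if f j < 0 ∧ m j = false then f j else 0)
        - (∑ j : Fin n, if 0 < f j ∧ m j = true then f j else 0)
      = ∑ j : Fin n, ((if f j < 0 ∧ m j = false then f j else 0)
          - (if 0 < f j ∧ m j = true then f j else 0)) := by
    intro m f
    rw [Finset.sum_sub_distrib]
  have h1 := key (Function.update mem j0 (!mem j0)) (Function.update g j0 (-(g j0)))
  have h2 := key mem g
  have hsum : (∑ j : Fin n,
      ((if Function.update g j0 (-(g j0)) j < 0 ∧ Function.update mem j0 (!mem j0) j = false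
          then Function.update g j0 (-(g j0)) j else 0)
        - (if 0 < Function.update g j0 (-(g j0)) j ∧ Function.update mem j0 (!mem j0) j = true
          then Function.update g j0 (-(g j0)) j else 0)))
      = ∑ j : Fin n, ((if g j < 0 ∧ mem j = false then g j else 0)
          - (if 0 < g j ∧ mem j = true then g j else 0)) := by
    apply Finset.sum_congr rfl
    intro j _
    by_cases hj : j = j0
    · subst hj
      simp only [Function.update_self]
      rcases hb : mem j with _ | _ <;> simp <;> omega
    · simp [Function.update_of_ne hj]
  omega
end

section
/- Under the assumption that a proper ERS loop γ satisfies ⟨γ, A⟩ = 1 for every arrow A of G (so γ traverses every arrow positively and exactly half of the edges — the 'red' ones), define λ(e) = Σ_A ⟨[A], e⟩ for any edge e. Then λ(e) depends only on whether e is red (traversed by γ) or blue (not traversed), and λ(blue) = λ(red) − 1 = ↗(σ_γ). -/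
open Finsupp

instance twoMulNeZero (n : ℕ) [NeZero n] : NeZero (2 * n) :=
  ⟨by have := NeZero.ne n; omega⟩

/-- A classical Gauss diagram of degree `n`: an oriented circle with `2n`
marked points (identified with `ZMod (2n)`), and `n` oriented chords (arrows)
given by injective tail/head maps whose ranges partition the marked points.
Edge `e` is the arc of the circle from marked point `e` to `e + 1`. -/
structure GaussDiagram (n : ℕ) [NeZero n] where
  tail : Fin n → ZMod (2 * n)
  head : Fin n → ZMod (2 * n)
  inj : Function.Injective (Sum.elim tail head : Fin n ⊕ Fin n → ZMod (2 * n))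
  cover : ∀ v : ZMod (2 * n), (∃ j, tail j = v) ∨ (∃ j, head j = v)

variable {n : ℕ} [NeZero n]

/-- Edge `e` (from vertex `e` to `e + 1`) lies on the cyclic arc running from
vertex `h` to vertex `t` along the circle's orientation. -/
def inArc (h t e : ZMod (2 * n)) : Prop := (e - h).val < (t - h).val

instance (h t e : ZMod (2 * n)) : Decidable (inArc h t e) := by
  unfold inArc; infer_instance

/-- The simplicial boundary map of the 1-complex underlying a Gauss diagram:
1-cells are the `2n` circle edges and the `n` arrows. -/
noncomputable def bdry (D : GaussDiagram n) :
    ((ZMod (2 * n) ⊕ Fin n) →₀ ℤ) →ₗ[ℤ] (ZMod (2 * n) →₀ ℤ) :=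
  Finsupp.lsum ℤ fun c =>
    match c with
    | Sum.inl e => Finsupp.lsingle (e + 1) - Finsupp.lsingle e
    | Sum.inr j => Finsupp.lsingle (D.head j) - Finsupp.lsingle (D.tail j)

/-- The class `[K]` of the base circle: the sum of all circle edges. -/
noncomputable def circleK : (ZMod (2 * n) ⊕ Fin n) →₀ ℤ :=
  ∑ e : ZMod (2 * n), Finsupp.single (Sum.inl e) 1

/-- The fundamental loop `[A_j]` of arrow `j`: the arrow followed by the arc of
the circle from its head back to its tail, along the circle's orientation. -/
noncomputable def loopA (D : GaussDiagram n) (j : Fin n) :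
    (ZMod (2 * n) ⊕ Fin n) →₀ ℤ :=
  Finsupp.single (Sum.inr j) 1 +
    ∑ e : ZMod (2 * n),
      (if inArc (D.head j) (D.tail j) e then (1 : ℤ) else 0) •
        Finsupp.single (Sum.inl e) 1

/-- The family of `n + 1` fundamental loops: the base circle and one loop per
arrow. -/
noncomputable def fundLoop (D : GaussDiagram n) :
    Option (Fin n) → ((ZMod (2 * n) ⊕ Fin n) →₀ ℤ)
  | none => circleK
  | Option.some j => loopA D j

/-- `λ(e) = Σ_A ⟨[A], e⟩`: the number of fundamental loops of arrows passing
through the edge `e`. -/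
def lam (D : GaussDiagram n) (e : ZMod (2 * n)) : ℤ :=
  ∑ j : Fin n, if inArc (D.head j) (D.tail j) e then 1 else 0

/-- The red edge following the red edge `e` along the loop `γ` (the
permutation `σ_γ`). -/
noncomputable def nextEdge (D : GaussDiagram n)
    (γ : (ZMod (2 * n) ⊕ Fin n) →₀ ℤ) (e : ZMod (2 * n)) : ZMod (2 * n) :=
  if h : ∃ j, D.tail j = e + 1 ∧ γ (Sum.inr j) = 1 then D.head h.choose
  else if h' : ∃ j, D.head j = e + 1 ∧ γ (Sum.inr j) = -1 then D.tail h'.choose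
  else e + 1

/-!
Across a vertex `v`, both `λ` and the edge coefficients of `γ` jump by `+1` if `v` is a head and
by `-1` if it is a tail (for `γ` this is `∂γ = 0` with all arrow coefficients `1`), so `λ - γ` is
constant around the circle. At the edge `-1`, which ends at the vertex `0`, the fundamental loops
through it are those of the arrows with `t < h`; and a red edge `e = t_j - 1` is followed by
`σ_γ e = h_j`, so the constant is `↗(σ_γ)`.
-/

theorem ZMod.intCast_val_sub_eq_sub_add_ite {N : ℕ} [NeZero N] (a b : ZMod N) :
    ((a - b).val : ℤ) = a.val - b.val + if b.val ≤ a.val then 0 else (N : ℤ) := by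
  rcases le_or_gt b.val a.val with hba | hab
  · rw [ZMod.val_sub hba, if_pos hba]
    omega
  · have hba : b - a ≠ 0 := fun h => hab.ne (by rw [sub_eq_zero.mp h])
    have := ZMod.val_lt b
    rw [← neg_sub, ZMod.neg_val, if_neg hba, ZMod.val_sub hab.le, if_neg hab.not_ge]
    omega

theorem ZMod.apply_eq_apply_zero_of_forall_add_one {N : ℕ} [NeZero N] {α : Type*}
    {f : ZMod N → α} (hf : ∀ x, f (x + 1) = f x) (x : ZMod N) : f x = f 0 := by
  rw [← ZMod.natCast_zmod_val x]
  induction x.val with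
  | zero => rw [Nat.cast_zero]
  | succ k ih => rw [Nat.cast_succ, hf, ih]

theorem val_one_two_mul : (1 : ZMod (2 * n)).val = 1 :=
  ZMod.val_one'' (by have := NeZero.ne n; omega)

theorem ite_inArc_sub_ite_inArc_sub_one {h t : ZMod (2 * n)} (hht : h ≠ t) (e : ZMod (2 * n)) :
    ((if inArc h t e then 1 else 0) - if inArc h t (e - 1) then 1 else 0 : ℤ) =
      (if h = e then 1 else 0) - if t = e then 1 else 0 := by
  have hx := ZMod.intCast_val_sub_eq_sub_add_ite (e - h) 1
  rw [sub_right_comm, val_one_two_mul] at hx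
  have hd : (t - h).val ≠ 0 := by rwa [ne_eq, ZMod.val_eq_zero, sub_eq_zero, eq_comm]
  have he : h = e ↔ (e - h).val = 0 := by rw [ZMod.val_eq_zero, sub_eq_zero, eq_comm]
  have ht : t = e ↔ (e - h).val = (t - h).val := by
    rw [ZMod.val_injective _ |>.eq_iff, sub_left_inj, eq_comm]
  have := ZMod.val_lt (e - h)
  have := ZMod.val_lt (t - h)
  simp only [inArc, he, ht]
  split_ifs at * <;> omega

-- The edge `-1` lies on the arc from `h` to `t` iff the arc wraps past the vertex `0`,
-- i.e. iff `t.val < h.val`.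
theorem ite_inArc_neg_one {h t : ZMod (2 * n)} (hht : h ≠ t) :
    (if inArc h t (-1) then 1 else 0 : ℤ) =
      (if (t - 1).val < h.val then 1 else 0) + if t = 0 then 1 else 0 := by
  have h1 := ZMod.intCast_val_sub_eq_sub_add_ite (-1) h
  have h2 := ZMod.intCast_val_sub_eq_sub_add_ite t h
  have h3 := ZMod.intCast_val_sub_eq_sub_add_ite t 1
  have h4 := ZMod.intCast_val_sub_eq_sub_add_ite (0 : ZMod (2 * n)) 1
  rw [zero_sub, ZMod.val_zero] at h4
  rw [val_one_two_mul] at h3 h4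
  have ht : t = 0 ↔ t.val = 0 := (ZMod.val_eq_zero t).symm
  have hv : h.val ≠ t.val := fun hv => hht (ZMod.val_injective _ hv)
  have := ZMod.val_lt h
  have := ZMod.val_lt t
  have := ZMod.val_lt (-1 : ZMod (2 * n))
  simp only [inArc, ht]
  split_ifs at * <;> omega

open Finset

namespace GaussDiagram

variable (D : GaussDiagram n)

theorem tail_injective : Function.Injective D.tail :=
  fun a b hab => Sum.inl_injective (D.inj (by simpa using hab))

theorem head_injective : Function.Injective D.head :=
  fun a b hab => Sum.inr_injective (D.inj (by simpa using hab))

theorem head_ne_tail (j k : Fin n) : D.head j ≠ D.tail k :=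
  fun h => Sum.inr_ne_inl (D.inj (by simpa using h))

/-- The boundary of the sum of all arrows. -/
def incidence (v : ZMod (2 * n)) : ℤ :=
  ∑ j : Fin n, ((if D.head j = v then 1 else 0) - if D.tail j = v then 1 else 0)

theorem incidence_head (j : Fin n) : D.incidence (D.head j) = 1 := by
  rw [incidence, Finset.sum_eq_single j]
  · simp [(D.head_ne_tail j j).symm]
  · intro k _ hkj
    simp [D.head_injective.ne hkj, D.head_ne_tail j k |>.symm]
  · simp

theorem incidence_tail (j : Fin n) : D.incidence (D.tail j) = -1 := by
  rw [incidence, Finset.sum_eq_single j]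
  · simp [D.head_ne_tail j j]
  · intro k _ hkj
    simp [D.tail_injective.ne hkj, D.head_ne_tail k j]
  · simp

end GaussDiagram

theorem lam_sub_lam_sub_one (D : GaussDiagram n) (e : ZMod (2 * n)) :
    lam D e - lam D (e - 1) = D.incidence e := by
  rw [lam, lam, GaussDiagram.incidence, ← Finset.sum_sub_distrib]
  exact Finset.sum_congr rfl fun j _ =>
    ite_inArc_sub_ite_inArc_sub_one (D.head_ne_tail j j) e

theorem bdry_apply_of_arrows (D : GaussDiagram n) {γ : (ZMod (2 * n) ⊕ Fin n) →₀ ℤ}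
    (harrow : ∀ j, γ (Sum.inr j) = 1) (v : ZMod (2 * n)) :
    bdry D γ v = γ (Sum.inl (v - 1)) - γ (Sum.inl v) + D.incidence v := by
  rw [bdry, Finsupp.lsum_apply, Finsupp.sum_fintype _ _ (by simp), Finsupp.finsetSum_apply,
    Fintype.sum_sum_type]
  simp [single_apply, harrow, GaussDiagram.incidence, ← eq_sub_iff_add_eq]

section Cycle

variable {D : GaussDiagram n} {γ : (ZMod (2 * n) ⊕ Fin n) →₀ ℤ}

theorem apply_inl_sub_apply_inl_sub_one (hγ : γ ∈ LinearMap.ker (bdry D))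
    (harrow : ∀ j, γ (Sum.inr j) = 1) (v : ZMod (2 * n)) :
    γ (Sum.inl v) - γ (Sum.inl (v - 1)) = D.incidence v := by
  have h := bdry_apply_of_arrows D harrow v
  rw [LinearMap.mem_ker.mp hγ, Finsupp.coe_zero, Pi.zero_apply] at h
  linarith

theorem lam_sub_apply_inl_eq (hγ : γ ∈ LinearMap.ker (bdry D))
    (harrow : ∀ j, γ (Sum.inr j) = 1) (e : ZMod (2 * n)) :
    lam D e - γ (Sum.inl e) = lam D (-1) - γ (Sum.inl (-1)) := by
  have h := ZMod.apply_eq_apply_zero_of_forall_add_one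
    (f := fun x => lam D (x - 1) - γ (Sum.inl (x - 1))) (fun x => by
      have := lam_sub_lam_sub_one D x
      have := apply_inl_sub_apply_inl_sub_one hγ harrow x
      simp only [add_sub_cancel_right]
      linarith) (e + 1)
  simpa only [add_sub_cancel_right, zero_sub] using h

theorem apply_inl_eq_one_iff (hγ : γ ∈ LinearMap.ker (bdry D))
    (harrow : ∀ j, γ (Sum.inr j) = 1)
    (hedge : ∀ e, γ (Sum.inl e) = 0 ∨ γ (Sum.inl e) = 1) (e : ZMod (2 * n)) :
    γ (Sum.inl e) = 1 ↔ ∃ j, D.tail j = e + 1 := by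
  have h := apply_inl_sub_apply_inl_sub_one hγ harrow (e + 1)
  rw [add_sub_cancel_right] at h
  rcases D.cover (e + 1) with ⟨j, hj⟩ | ⟨j, hj⟩
  · rw [show D.incidence (e + 1) = -1 from hj ▸ D.incidence_tail j] at h
    refine iff_of_true ?_ ⟨j, hj⟩
    rcases hedge (e + 1) with h' | h' <;> rcases hedge e with h'' | h'' <;> omega
  · rw [show D.incidence (e + 1) = 1 from hj ▸ D.incidence_head j] at h
    refine iff_of_false ?_ fun ⟨k, hk⟩ => D.head_ne_tail j k (hj.trans hk.symm)
    rcases hedge (e + 1) with h' | h' <;> rcases hedge e with h'' | h'' <;> omega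

theorem apply_inl_neg_one (hγ : γ ∈ LinearMap.ker (bdry D))
    (harrow : ∀ j, γ (Sum.inr j) = 1)
    (hedge : ∀ e, γ (Sum.inl e) = 0 ∨ γ (Sum.inl e) = 1) :
    γ (Sum.inl (-1)) = ∑ j, if D.tail j = 0 then 1 else 0 := by
  have h := apply_inl_eq_one_iff hγ harrow hedge (-1)
  rw [neg_add_cancel] at h
  rw [Fintype.sum_ite_eq_ite_exists _ fun i j hi hj => D.tail_injective (hi.trans hj.symm)]
  split_ifs with h0
  · exact h.mpr h0
  · exact (hedge (-1)).resolve_right (mt h.mp h0)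

theorem nextEdge_eq_head (harrow : ∀ j, γ (Sum.inr j) = 1) {e : ZMod (2 * n)} {j : Fin n}
    (hj : D.tail j = e + 1) : nextEdge D γ e = D.head j := by
  have hex : ∃ k, D.tail k = e + 1 ∧ γ (Sum.inr k) = 1 := ⟨j, hj, harrow j⟩
  rw [nextEdge, dif_pos hex, D.tail_injective (hex.choose_spec.1.trans hj.symm)]

theorem ncard_setOf_lt_nextEdge (hγ : γ ∈ LinearMap.ker (bdry D))
    (harrow : ∀ j, γ (Sum.inr j) = 1)
    (hedge : ∀ e, γ (Sum.inl e) = 0 ∨ γ (Sum.inl e) = 1) :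
    {e | γ (Sum.inl e) = 1 ∧ e.val < (nextEdge D γ e).val}.ncard =
      #{j | (D.tail j - 1).val < (D.head j).val} := by
  have hset : {e | γ (Sum.inl e) = 1 ∧ e.val < (nextEdge D γ e).val} =
      (fun j => D.tail j - 1) '' {j | (D.tail j - 1).val < (D.head j).val} := by
    ext e
    simp only [Set.mem_ofPred_eq, Set.mem_image, apply_inl_eq_one_iff hγ harrow hedge]
    constructor
    · rintro ⟨⟨j, hj⟩, hlt⟩
      rw [nextEdge_eq_head harrow hj] at hlt
      exact ⟨j, by rwa [hj, add_sub_cancel_right], by rw [hj, add_sub_cancel_right]⟩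
    · rintro ⟨j, hlt, rfl⟩
      have hj : D.tail j = D.tail j - 1 + 1 := (sub_add_cancel _ _).symm
      exact ⟨⟨j, hj⟩, by rwa [nextEdge_eq_head harrow hj]⟩
  rw [hset, Set.ncard_image_of_injective _ fun a b h => D.tail_injective (sub_left_injective h),
    Set.ncard_eq_toFinset_card', Set.toFinset_ofPred]

end Cycle

theorem lam_neg_one (D : GaussDiagram n) :
    lam D (-1) = #{j | (D.tail j - 1).val < (D.head j).val} +
      ∑ j, if D.tail j = 0 then 1 else 0 := by
  rw [lam, Finset.sum_congr rfl fun j _ => ite_inArc_neg_one (D.head_ne_tail j j),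
    Finset.sum_add_distrib, Finset.sum_boole]

/-- Key lemma: if the ERS loop `γ` traverses every arrow positively
(`⟨γ,A⟩ = 1` for all `A`), then `λ(e)` only depends on the colour of `e`
(red = traversed by `γ`, blue = not), and
`λ(blue) = λ(red) − 1 = ↗(σ_γ)`. -/
theorem lam_eq_up (n : ℕ) [NeZero n] (D : GaussDiagram n)
    (γ : (ZMod (2 * n) ⊕ Fin n) →₀ ℤ) (hγ : γ ∈ LinearMap.ker (bdry D))
    (harrow : ∀ j : Fin n, γ (Sum.inr j) = 1)
    (hedge : ∀ e : ZMod (2 * n), γ (Sum.inl e) = 0 ∨ γ (Sum.inl e) = 1) :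
    (∀ e : ZMod (2 * n), γ (Sum.inl e) = 1 →
      lam D e = ({e' : ZMod (2 * n) |
        γ (Sum.inl e') = 1 ∧ e'.val < (nextEdge D γ e').val}.ncard : ℤ) + 1) ∧
    (∀ e : ZMod (2 * n), γ (Sum.inl e) = 0 →
      lam D e = ({e' : ZMod (2 * n) |
        γ (Sum.inl e') = 1 ∧ e'.val < (nextEdge D γ e').val}.ncard : ℤ)) := by
  have key : ∀ e, lam D e - γ (Sum.inl e) =
      ({e' | γ (Sum.inl e') = 1 ∧ e'.val < (nextEdge D γ e').val}.ncard : ℤ) := fun e => by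
    rw [lam_sub_apply_inl_eq hγ harrow e, lam_neg_one, apply_inl_neg_one hγ harrow hedge,
      ncard_setOf_lt_nextEdge hγ harrow hedge]
    ring
  exact ⟨fun e he => by linarith [key e], fun e he => by linarith [key e]⟩
end

section
/- Let (π, w) be a weighted group with π abelian and w trivial. The abelianization map (sending a Gauss diagram on π to the abelian Gauss diagram with each fundamental loop decorated by the sum of the π-markings of the edges it traverses) induces a bijection between abelian Gauss diagrams on π and equivalence classes of Gauss diagrams on π under w₀-moves. -/
open Finsupp

variable {n : ℕ} [NeZero n]

/-- A `w₀`-move with conjugating element `g` on the arrow `j` of a Gauss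
diagram on the abelian group `π`: `g` is added to the markings of the two edges
preceding the endpoints of the arrow and subtracted from the markings of the
two edges following them. -/
def wMove {π : Type*} [AddCommGroup π] (D : GaussDiagram n)
    (m m' : ZMod (2 * n) → π) : Prop :=
  ∃ (j : Fin n) (g : π), m' = fun e =>
    m e + (if e = D.tail j - 1 then g else 0) + (if e = D.head j - 1 then g else 0)
        - (if e = D.tail j then g else 0) - (if e = D.head j then g else 0)

/-- The abelianization map: a Gauss diagram on `π` (edge markings
`m : edges → π`) determines an abelian Gauss diagram, decorating each
fundamental loop with the sum of the markings of the edges it traverses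
(one element of `π` per arrow, plus the global marking of the base circle). -/
def abMap {π : Type*} [AddCommGroup π] (D : GaussDiagram n)
    (m : ZMod (2 * n) → π) : (Fin n → π) × π :=
  (fun j => ∑ e : ZMod (2 * n),
      if inArc (D.head j) (D.tail j) e then m e else 0,
   ∑ e : ZMod (2 * n), m e)

section Helpers

variable {π : Type*} [AddCommGroup π]

lemma two_n_pos : 0 < 2 * n := Nat.pos_of_ne_zero (NeZero.ne _)

lemma val_sub_one (y : ZMod (2 * n)) :
    (y - 1).val = if y = 0 then 2 * n - 1 else y.val - 1 := by
  have h2 : 1 < 2 * n := by have := NeZero.ne n; omega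
  have h1 : (1 : ZMod (2 * n)).val = 1 := by
    rw [ZMod.val_one_eq_one_mod]; exact Nat.mod_eq_of_lt h2
  have hy : y.val < 2 * n := ZMod.val_lt y
  have hneg : (-1 : ZMod (2 * n)).val = 2 * n - 1 := by
    rw [ZMod.neg_val]
    rw [if_neg (fun h => by rw [h] at h1; simp at h1)]
    rw [h1]
  have hrw : (y - 1).val = (y.val + (2 * n - 1)) % (2 * n) := by
    rw [sub_eq_add_neg, ZMod.val_add, hneg]
  rw [hrw]
  by_cases h0 : y = 0
  · simp [h0, Nat.mod_eq_of_lt (by omega : 2 * n - 1 < 2 * n)]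
  · rw [if_neg h0]
    have hv : y.val ≠ 0 := fun h => h0 (by rwa [← ZMod.val_eq_zero])
    have : y.val + (2 * n - 1) = 2 * n + (y.val - 1) := by omega
    rw [this, Nat.add_mod_left, Nat.mod_eq_of_lt (by omega)]

lemma zmod_sum_univ {π : Type*} [AddCommGroup π] (f : ZMod (2 * n) → π) :
    ∑ i ∈ Finset.range (2 * n), f (i : ZMod (2 * n)) = ∑ e : ZMod (2 * n), f e := by
  refine Finset.sum_bij' (fun i _ => ((i : ℕ) : ZMod (2 * n))) (fun e _ => e.val)
    (fun a _ => Finset.mem_univ _) (fun e _ => Finset.mem_range.2 (ZMod.val_lt e))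
    (fun a ha => ZMod.val_cast_of_lt (Finset.mem_range.1 ha))
    (fun e _ => ZMod.natCast_rightInverse e) (fun a _ => rfl)

lemma sum_val_lt {L : ℕ} (hL : L ≤ 2 * n) (f : ZMod (2 * n) → π) :
    ∑ k : ZMod (2 * n), (if k.val < L then f k else 0)
      = ∑ i ∈ Finset.range L, f (i : ZMod (2 * n)) := by
  rw [← zmod_sum_univ (f := fun k => if k.val < L then f k else 0)]
  rw [← Finset.sum_subset (Finset.range_subset_range.2 hL)
    (fun i hi2 hi => by
      rw [if_neg]
      rw [ZMod.val_cast_of_lt (Finset.mem_range.1 hi2)]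
      exact fun h => hi (Finset.mem_range.2 h))]
  refine Finset.sum_congr rfl fun i hi => ?_
  rw [if_pos]
  rw [ZMod.val_cast_of_lt (lt_of_lt_of_le (Finset.mem_range.1 hi) hL)]
  exact Finset.mem_range.1 hi

lemma total_telescope (c : ZMod (2 * n) → π) :
    ∑ e : ZMod (2 * n), (c (e + 1) - c e) = 0 := by
  rw [Finset.sum_sub_distrib]
  rw [show ∑ e : ZMod (2 * n), c (e + 1) = ∑ e : ZMod (2 * n), c e from
    Fintype.sum_equiv (Equiv.addRight 1) _ _ (fun e => rfl)]
  simp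

lemma arc_telescope (h t : ZMod (2 * n)) (c : ZMod (2 * n) → π) :
    ∑ e : ZMod (2 * n), (if inArc h t e then (c (e + 1) - c e) else 0) = c t - c h := by
  have reindex : ∑ e : ZMod (2 * n), (if inArc h t e then (c (e + 1) - c e) else 0)
      = ∑ k : ZMod (2 * n), (if k.val < (t - h).val then (c (h + k + 1) - c (h + k)) else 0) := by
    refine Fintype.sum_equiv (Equiv.subRight h) _ _ fun e => ?_
    simp only [Equiv.subRight_apply, add_sub_cancel]
    rfl
  rw [reindex, sum_val_lt (le_of_lt (ZMod.val_lt _))]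
  set g : ℕ → π := fun i => c (h + (i : ZMod (2 * n))) with hg
  have key : ∀ i : ℕ, c (h + (i : ZMod (2 * n)) + 1) - c (h + (i : ZMod (2 * n)))
      = g (i + 1) - g i := fun i => by
    simp only [hg, Nat.cast_add, Nat.cast_one, add_assoc]
  rw [Finset.sum_congr rfl fun i _ => key i, Finset.sum_range_sub g]
  have : ((((t - h).val : ℕ)) : ZMod (2 * n)) = t - h := ZMod.natCast_rightInverse (t - h)
  simp [hg, this]

end Helpers

section Moves

variable {π : Type*} [AddCommGroup π]

lemma my_ite_sub (P : Prop) [Decidable P] (x y : π) :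
    (if P then (x - y) else 0) = (if P then x else 0) - (if P then y else 0) := by
  split <;> simp

lemma my_ite_add (P : Prop) [Decidable P] (x y : π) :
    (if P then (x + y) else 0) = (if P then x else 0) + (if P then y else 0) := by
  split <;> simp

lemma sum_ite_ind (P : ZMod (2 * n) → Prop) [DecidablePred P] (a : ZMod (2 * n)) (g : π) :
    ∑ e : ZMod (2 * n), (if P e then (if e = a then g else 0) else 0)
      = if P a then g else 0 := by
  have key : ∀ e, (if P e then (if e = a then g else 0) else 0)
      = if e = a then (if P a then g else 0) else 0 := by
    intro e
    by_cases he : e = a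
    · subst he; simp
    · simp [he]
  rw [Finset.sum_congr rfl fun e _ => key e]
  rw [Finset.sum_ite_eq' Finset.univ a fun _ => (if P a then g else 0)]
  simp

lemma indicator_step (h t v : ZMod (2 * n)) (hne : h ≠ t) (x : π) :
    (if inArc h t (v - 1) then x else 0) - (if inArc h t v then x else 0)
      = (if v = t then x else 0) - (if v = h then x else 0) := by
  set L := (t - h).val with hL
  set X := (v - h).val with hX
  have hL0 : L ≠ 0 := by
    rw [hL, Ne, ZMod.val_eq_zero, sub_eq_zero]
    exact fun hh => hne hh.symm
  have hLlt : L < 2 * n := ZMod.val_lt _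
  have hXlt : X < 2 * n := ZMod.val_lt _
  have P1 : inArc h t (v - 1) ↔ (X ≠ 0 ∧ X - 1 < L) := by
    unfold inArc
    rw [sub_right_comm, val_sub_one (v - h)]
    by_cases h0 : v - h = 0
    · rw [if_pos h0]
      have : X = 0 := by rw [hX, h0]; simp
      constructor
      · intro hlt; omega
      · rintro ⟨h1, _⟩; exact absurd this h1
    · rw [if_neg h0]
      have : X ≠ 0 := by rw [hX, Ne, ZMod.val_eq_zero]; exact h0
      constructor
      · intro hlt; exact ⟨this, hlt⟩
      · rintro ⟨_, h2⟩; exact h2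
  have P2 : inArc h t v ↔ X < L := Iff.rfl
  have P3 : (v = t) ↔ X = L := by
    constructor
    · intro hh; rw [hX, hL, hh]
    · intro hh
      have : v - h = t - h := ZMod.val_injective _ (by rw [← hX, ← hL, hh])
      exact sub_left_injective this
  have P4 : (v = h) ↔ X = 0 := by
    rw [hX, ZMod.val_eq_zero, sub_eq_zero]
  rw [if_congr P1 rfl rfl, if_congr P2 rfl rfl, if_congr P3 rfl rfl, if_congr P4 rfl rfl]
  split_ifs <;> (try (exfalso; omega)) <;> abel

end Moves

section Diagram

variable {π : Type*} [AddCommGroup π] (D : GaussDiagram n)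

lemma tail_injective : Function.Injective D.tail := fun a b h => by
  have := D.inj (a₁ := Sum.inl a) (a₂ := Sum.inl b) (by simpa using h)
  simpa using this

lemma head_injective : Function.Injective D.head := fun a b h => by
  have := D.inj (a₁ := Sum.inr a) (a₂ := Sum.inr b) (by simpa using h)
  simpa using this

lemma tail_ne_head (i j : Fin n) : D.tail i ≠ D.head j := fun h => by
  have := D.inj (a₁ := Sum.inl i) (a₂ := Sum.inr j) (by simpa using h)
  simp at this

/-- The marking change of a `w₀`-move with element `g` at arrow `j`. -/
def mvec (j : Fin n) (g : π) : ZMod (2 * n) → π := fun e =>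
  (if e = D.tail j - 1 then g else 0) + (if e = D.head j - 1 then g else 0)
    - (if e = D.tail j then g else 0) - (if e = D.head j then g else 0)

lemma wMove_mvec (m : ZMod (2 * n) → π) (j : Fin n) (g : π) :
    wMove D m (fun e => m e + mvec D j g e) := by
  refine ⟨j, g, funext fun e => ?_⟩
  simp only [mvec]
  abel

lemma eqvgen_add_sum (m : ZMod (2 * n) → π) (g : Fin n → π) (s : Finset (Fin n)) :
    Relation.EqvGen (wMove D) m (fun e => m e + ∑ j ∈ s, mvec D j (g j) e) := by
  classical
  induction s using Finset.induction_on with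
  | empty => simpa using Relation.EqvGen.refl m
  | @insert a s ha ih =>
    refine Relation.EqvGen.trans _ _ _ ih (Relation.EqvGen.rel _ _ ?_)
    have : (fun e => m e + ∑ j ∈ insert a s, mvec D j (g j) e)
        = fun e => (m e + ∑ j ∈ s, mvec D j (g j) e) + mvec D a (g a) e := by
      funext e
      rw [Finset.sum_insert ha]
      abel
    rw [this]
    exact wMove_mvec D _ a (g a)

lemma abMap_move {m m' : ZMod (2 * n) → π} (hmove : wMove D m m') :
    abMap D m' = abMap D m := by
  obtain ⟨j, g, rfl⟩ := hmove
  have single : ∀ a : ZMod (2 * n), ∑ e : ZMod (2 * n), (if e = a then g else 0) = g := by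
    intro a
    rw [Finset.sum_ite_eq' Finset.univ a fun _ => g]
    simp
  unfold abMap
  simp only [Prod.mk.injEq]
  constructor
  · funext j'
    have hne' : D.head j' ≠ D.tail j' := fun h => tail_ne_head D j' j' h.symm
    have split5 : ∀ (e : ZMod (2 * n)),
        (if inArc (D.head j') (D.tail j') e then
          (m e + (if e = D.tail j - 1 then g else 0) + (if e = D.head j - 1 then g else 0)
            - (if e = D.tail j then g else 0) - (if e = D.head j then g else 0)) else 0)
        = (if inArc (D.head j') (D.tail j') e then m e else 0)
          + (if inArc (D.head j') (D.tail j') e then (if e = D.tail j - 1 then g else 0) else 0)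
          + (if inArc (D.head j') (D.tail j') e then (if e = D.head j - 1 then g else 0) else 0)
          - (if inArc (D.head j') (D.tail j') e then (if e = D.tail j then g else 0) else 0)
          - (if inArc (D.head j') (D.tail j') e then (if e = D.head j then g else 0) else 0) := by
      intro e; split <;> simp
    rw [Finset.sum_congr rfl fun e _ => split5 e]
    rw [Finset.sum_sub_distrib, Finset.sum_sub_distrib, Finset.sum_add_distrib,
      Finset.sum_add_distrib]
    rw [sum_ite_ind _ (D.tail j - 1) g, sum_ite_ind _ (D.head j - 1) g,
      sum_ite_ind _ (D.tail j) g, sum_ite_ind _ (D.head j) g]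
    have i1 := indicator_step (D.head j') (D.tail j') (D.tail j) hne' g
    have i2 := indicator_step (D.head j') (D.tail j') (D.head j) hne' g
    have hz : ((if D.tail j = D.tail j' then g else 0) - (if D.tail j = D.head j' then g else 0))
        + ((if D.head j = D.tail j' then g else 0) - (if D.head j = D.head j' then g else 0))
        = 0 := by
      by_cases hjj : j = j'
      · subst hjj
        rw [if_pos rfl, if_pos rfl, if_neg (tail_ne_head D j j), if_neg fun h =>
          tail_ne_head D j j h.symm]
        abel
      · rw [if_neg fun h => hjj (tail_injective D h),
          if_neg (tail_ne_head D j j'),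
          if_neg fun h => tail_ne_head D j' j h.symm,
          if_neg fun h => hjj (head_injective D h)]
        abel
    calc (∑ e : ZMod (2 * n), if inArc (D.head j') (D.tail j') e then m e else 0)
          + (if inArc (D.head j') (D.tail j') (D.tail j - 1) then g else 0)
          + (if inArc (D.head j') (D.tail j') (D.head j - 1) then g else 0)
          - (if inArc (D.head j') (D.tail j') (D.tail j) then g else 0)
          - (if inArc (D.head j') (D.tail j') (D.head j) then g else 0)
        = (∑ e : ZMod (2 * n), if inArc (D.head j') (D.tail j') e then m e else 0)
          + (((if inArc (D.head j') (D.tail j') (D.tail j - 1) then g else 0)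
              - (if inArc (D.head j') (D.tail j') (D.tail j) then g else 0))
            + ((if inArc (D.head j') (D.tail j') (D.head j - 1) then g else 0)
              - (if inArc (D.head j') (D.tail j') (D.head j) then g else 0))) := by abel
      _ = ∑ e : ZMod (2 * n), if inArc (D.head j') (D.tail j') e then m e else 0 := by
          rw [i1, i2, hz, add_zero]
  · rw [Finset.sum_sub_distrib, Finset.sum_sub_distrib, Finset.sum_add_distrib,
      Finset.sum_add_distrib, single, single, single, single]
    abel

end Diagram

/-- For `π` abelian with trivial weight `w₀`, the abelianization map induces a
bijection between abelian Gauss diagrams on `π` and equivalence classes of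
Gauss diagrams on `π` under `w₀`-moves: two sets of edge markings have the same
abelianization iff they are related by `w₀`-moves, and every abelian Gauss
diagram arises as an abelianization. -/
theorem abMap_bijective_on_wMove_classes (n : ℕ) [NeZero n]
    (D : GaussDiagram n) (π : Type*) [AddCommGroup π] :
    (∀ m m' : ZMod (2 * n) → π,
      abMap D m = abMap D m' ↔ Relation.EqvGen (wMove D) m m') ∧
    Function.Surjective (abMap (π := π) D) := by
  classical
  constructor
  · intro m m'
    constructor
    · intro hab
      set d : ZMod (2 * n) → π := fun e => m' e - m e with hd
      set c : ZMod (2 * n) → π :=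
        fun v => ∑ i ∈ Finset.range v.val, d ((i : ℕ) : ZMod (2 * n)) with hc
      have hsum : ∑ e : ZMod (2 * n), d e = 0 := by
        have h2 := congrArg Prod.snd hab
        simp only [abMap] at h2
        simp only [hd]
        rw [Finset.sum_sub_distrib, h2, sub_self]
      have harc : ∀ j, ∑ e : ZMod (2 * n),
          (if inArc (D.head j) (D.tail j) e then d e else 0) = 0 := by
        intro j
        have h1 := congrArg (fun p => p.1 j) hab
        simp only [abMap] at h1
        have key : ∀ e, (if inArc (D.head j) (D.tail j) e then d e else 0)
            = (if inArc (D.head j) (D.tail j) e then m' e else 0)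
              - (if inArc (D.head j) (D.tail j) e then m e else 0) := by
          intro e; simp only [hd]; split <;> simp
        rw [Finset.sum_congr rfl fun e _ => key e, Finset.sum_sub_distrib, sub_eq_zero]
        exact h1.symm
      have hdc : ∀ e : ZMod (2 * n), d e = c (e + 1) - c e := by
        intro e
        have hv : e.val < 2 * n := ZMod.val_lt e
        have hval1 : (1 : ZMod (2 * n)).val = 1 := by
          rw [ZMod.val_one_eq_one_mod]
          exact Nat.mod_eq_of_lt (by have := NeZero.ne n; omega)
        have hadd : (e + 1).val = (e.val + 1) % (2 * n) := by rw [ZMod.val_add, hval1]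
        have he : ((e.val : ℕ) : ZMod (2 * n)) = e := ZMod.natCast_rightInverse e
        by_cases hcase : e.val + 1 < 2 * n
        · have h1 : (e + 1).val = e.val + 1 := by rw [hadd, Nat.mod_eq_of_lt hcase]
          simp only [hc]
          rw [h1, Finset.sum_range_succ, he]
          abel
        · have h2n : e.val + 1 = 2 * n := by omega
          have h1 : (e + 1).val = 0 := by rw [hadd, h2n, Nat.mod_self]
          simp only [hc]
          rw [h1]
          simp only [Finset.range_zero, Finset.sum_empty]
          have hkey : (∑ i ∈ Finset.range e.val, d ((i : ℕ) : ZMod (2 * n))) + d e = 0 := by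
            calc (∑ i ∈ Finset.range e.val, d ((i : ℕ) : ZMod (2 * n))) + d e
                = ∑ i ∈ Finset.range (e.val + 1), d ((i : ℕ) : ZMod (2 * n)) := by
                  rw [Finset.sum_range_succ, he]
              _ = ∑ x : ZMod (2 * n), d x := by rw [h2n]; exact zmod_sum_univ d
              _ = 0 := hsum
          rw [zero_sub, eq_neg_iff_add_eq_zero, add_comm]
          exact hkey
      have hct : ∀ j, c (D.tail j) = c (D.head j) := by
        intro j
        have h2 : ∑ e : ZMod (2 * n),
            (if inArc (D.head j) (D.tail j) e then (c (e + 1) - c e) else 0) = 0 := by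
          calc ∑ e : ZMod (2 * n),
              (if inArc (D.head j) (D.tail j) e then (c (e + 1) - c e) else 0)
              = ∑ e : ZMod (2 * n), (if inArc (D.head j) (D.tail j) e then d e else 0) :=
                Finset.sum_congr rfl fun e _ => by rw [← hdc e]
            _ = 0 := harc j
        have h3 := arc_telescope (D.head j) (D.tail j) c
        rw [h2] at h3
        exact (sub_eq_zero.mp h3.symm)
      have hGc : ∀ v, (∑ j : Fin n, ((if v = D.tail j then c (D.tail j) else 0)
          + (if v = D.head j then c (D.tail j) else 0))) = c v := by
        intro v
        rcases D.cover v with ⟨j0, hj0⟩ | ⟨j0, hj0⟩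
        · rw [Finset.sum_eq_single j0]
          · rw [if_pos hj0.symm,
              if_neg (fun h => tail_ne_head D j0 j0 (hj0.trans h)), hj0, add_zero]
          · intro b _ hb
            rw [if_neg (fun h => hb (tail_injective D (h ▸ hj0).symm)),
              if_neg (fun h => tail_ne_head D j0 b (hj0.trans h))]
            simp
          · intro h; exact absurd (Finset.mem_univ j0) h
        · rw [Finset.sum_eq_single j0]
          · rw [if_neg (fun h => tail_ne_head D j0 j0 (h.symm.trans hj0.symm)),
              if_pos hj0.symm, hct j0, hj0, zero_add]
          · intro b _ hb
            rw [if_neg (fun h => tail_ne_head D b j0 (h ▸ hj0).symm),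
              if_neg (fun h => hb (head_injective D (h ▸ hj0).symm))]
            simp
          · intro h; exact absurd (Finset.mem_univ j0) h
      have hm' : m' = fun e => m e + ∑ j : Fin n, mvec D j (c (D.tail j)) e := by
        funext e
        have step : ∀ j : Fin n, mvec D j (c (D.tail j)) e
            = ((if e + 1 = D.tail j then c (D.tail j) else 0)
                + (if e + 1 = D.head j then c (D.tail j) else 0))
              - ((if e = D.tail j then c (D.tail j) else 0)
                + (if e = D.head j then c (D.tail j) else 0)) := by
          intro j
          simp only [mvec]
          rw [if_congr (eq_sub_iff_add_eq (a := e) (b := D.tail j) (c := 1)) rfl rfl,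
            if_congr (eq_sub_iff_add_eq (a := e) (b := D.head j) (c := 1)) rfl rfl]
          abel
        have hsum_mvec : ∑ j : Fin n, mvec D j (c (D.tail j)) e = c (e + 1) - c e := by
          rw [Finset.sum_congr rfl fun j _ => step j, Finset.sum_sub_distrib,
            hGc (e + 1), hGc e]
        rw [hsum_mvec, ← hdc e]
        simp only [hd]
        abel
      rw [hm']
      exact eqvgen_add_sum D m (fun j => c (D.tail j)) Finset.univ
    · intro hrel
      induction hrel with
      | rel a b h => exact (abMap_move D h).symm
      | refl a => rfl
      | symm a b _ ih => exact ih.symm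
      | trans a b c _ _ ih1 ih2 => exact ih1.trans ih2
  · rintro ⟨a, s⟩
    set b : Fin n → π :=
      fun j => a j - (if inArc (D.head j) (D.tail j) 0 then s else 0) with hb
    set c : ZMod (2 * n) → π :=
      fun v => ∑ j : Fin n, (if D.tail j = v then b j else 0) with hc
    have hct : ∀ j, c (D.tail j) = b j := by
      intro j
      simp only [hc]
      rw [Finset.sum_eq_single j (fun j' _ hj' => if_neg fun h => hj' (tail_injective D h))
        (fun h => absurd (Finset.mem_univ j) h), if_pos rfl]
    have hch : ∀ j, c (D.head j) = 0 := by
      intro j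
      simp only [hc]
      exact Finset.sum_eq_zero fun j' _ => if_neg (tail_ne_head D j' j)
    refine ⟨fun e => c (e + 1) - c e + (if e = 0 then s else 0), ?_⟩
    unfold abMap
    simp only [Prod.mk.injEq]
    constructor
    · funext j
      have split2 : ∀ e, (if inArc (D.head j) (D.tail j) e then
            (c (e + 1) - c e + (if e = (0 : ZMod (2 * n)) then s else 0)) else 0)
          = (if inArc (D.head j) (D.tail j) e then (c (e + 1) - c e) else 0)
            + (if inArc (D.head j) (D.tail j) e then
                (if e = (0 : ZMod (2 * n)) then s else 0) else 0) := by
        intro e; split <;> simp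
      rw [Finset.sum_congr rfl fun e _ => split2 e, Finset.sum_add_distrib,
        arc_telescope, sum_ite_ind _ 0 s, hct j, hch j]
      simp only [hb]
      abel
    · rw [Finset.sum_add_distrib, total_telescope,
        Finset.sum_ite_eq' Finset.univ 0 fun _ => s]
      simp
end
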